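/- For every codeword x ∈ C and every received pair vector ŷ ∈ (Σ²)^n, one has ŷ ∈ B(x) if and only if ŷ₀ ∈ B(0), where 0 is the all-zeros codeword. -/

import Mathlib

open scoped BigOperators

/-- Symbol pairs: elements of Σ² with Σ = {0,1} represented as `ZMod 2`. -/
abbrev Pair := ZMod 2 × ZMod 2

/-- Cyclic successor index: `i + 1 (mod n)`. -/
def nxt {n : ℕ} (i : Fin n) : Fin n := ⟨(i.val + 1) % n, Nat.mod_lt _ i.pos⟩

/-- Embedding of a binary vector into `ℝ^n`. -/
def emb {n : ℕ} (x : Fin n → ZMod 2) : Fin n → ℝ := fun i => ((x i).val : ℝ)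

/-- The binary linear code with parity-check matrix `H`. -/
def code {m n : ℕ} (H : Fin m → Fin n → ZMod 2) : Set (Fin n → ZMod 2) :=
  {x | ∀ j, ∑ i, H j i * x i = 0}

/-- The local (single parity check) code of row `j` of `H`. -/
def localCode {m n : ℕ} (H : Fin m → Fin n → ZMod 2) (j : Fin m) : Set (Fin n → ZMod 2) :=
  {x | ∑ i, H j i * x i = 0}

/-- The fundamental polytope `Q(H)`: intersection of convex hulls of local codes. -/
def fundPolytope {m n : ℕ} (H : Fin m → Fin n → ZMod 2) : Set (Fin n → ℝ) :=
  ⋂ j, convexHull ℝ (emb '' localCode H j)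

/-- The LP feasible region `P(H)` of pairs `(x, τ)`. -/
def feasible {m n : ℕ} (H : Fin m → Fin n → ZMod 2) :
    Set ((Fin n → ℝ) × (Fin n → Pair → ℝ)) :=
  {xt | (∀ i ab, xt.2 i ab ∈ Set.Icc (0 : ℝ) 1) ∧
        (∀ i, ∑ ab : Pair, xt.2 i ab = 1) ∧
        (∀ i, xt.1 i = xt.2 i (1, 0) + xt.2 i (1, 1)) ∧
        (∀ i, xt.1 (nxt i) = xt.2 i (0, 1) + xt.2 i (1, 1)) ∧
        xt.1 ∈ fundPolytope H}

/-- `T(x)`: the indicator vector of the symbol-pair read vector `π(x)`. -/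
def indic {n : ℕ} (x : Fin n → ZMod 2) : Fin n → Pair → ℝ :=
  fun i ab => if (x i, x (nxt i)) = ab then 1 else 0

/-- Channel transition probability `p(y | a)` of the symbol-pair read channel. -/
noncomputable def chan (p : ℝ) (y a : Pair) : ℝ := if y = a then 1 - p else p / 3

/-- Likelihood `p(ŷ | x)` of the received pair vector `ŷ` given codeword `x`. -/
noncomputable def lik {n : ℕ} (p : ℝ) (y : Fin n → Pair) (x : Fin n → ZMod 2) : ℝ :=
  ∏ i, chan p (y i) (x i, x (nxt i))

/-- The cost vector `λ = Λ(ŷ)`, `λ_{i,(a,b)} = -ln p(ŷ_i | (a,b))`. -/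
noncomputable def Lam {n : ℕ} (p : ℝ) (y : Fin n → Pair) : Fin n → Pair → ℝ :=
  fun i ab => -Real.log (chan p (y i) ab)

/-- The pairing `⟨λ, τ⟩ = Σ_i Σ_{(a,b)} λ_{i,(a,b)} τ_{i,(a,b)}`. -/
def innerP {n : ℕ} (l t : Fin n → Pair → ℝ) : ℝ := ∑ i, ∑ ab : Pair, l i ab * t i ab

/-- The fractional pair weight `W_fp`. -/
def Wfp {n : ℕ} (x : Fin n → ℝ) : ℝ := ∑ i, max (x i) (x (nxt i))

/-- The set `B(x)` of received vectors causing LP decoding failure when `x` was sent. -/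
def Bset {m n : ℕ} (H : Fin m → Fin n → ZMod 2) (p : ℝ) (x : Fin n → ZMod 2) :
    Set (Fin n → Pair) :=
  {y | ∃ xt ∈ feasible H, xt.1 ≠ emb x ∧ innerP (Lam p y) xt.2 ≤ innerP (Lam p y) (indic x)}

/-!
Adding a codeword `z` is a symmetry of the whole LP. On pair distributions it permutes the
four symbols of each position by `ab ↦ ab + (z i, z (i+1))`; on `ℝⁿ` it is the affine reflection
`v i ↦ 1 - v i` at the coordinates where `z i = 1`, which maps every local code, hence its convex
hull, onto itself. The cost vector of `ŷ + π(z)` is the cost vector of `ŷ` permuted in the same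
way, so the pairing `⟨Λ(ŷ), τ⟩` is unchanged, and `ŷ ∈ B(x)` transports to `ŷ + π(z) ∈ B(x + z)`.
Taking `z = x` gives one direction, and applying the same transport to `ŷ₀ ∈ B(0)` the other.
-/

def pairRead {n : ℕ} (x : Fin n → ZMod 2) : Fin n → Pair := fun i => (x i, x (nxt i))

def shiftPairs {n : ℕ} (c : Fin n → Pair) (t : Fin n → Pair → ℝ) : Fin n → Pair → ℝ :=
  fun i ab => t i (ab + c i)

lemma innerP_shiftPairs {n : ℕ} (c : Fin n → Pair) (l t : Fin n → Pair → ℝ) :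
    innerP (shiftPairs c l) (shiftPairs c t) = innerP l t :=
  Finset.sum_congr rfl fun i _ => Equiv.sum_comp (Equiv.addRight (c i)) fun ab => l i ab * t i ab

lemma sum_shiftPairs {n : ℕ} (c : Fin n → Pair) (t : Fin n → Pair → ℝ) (i : Fin n) :
    ∑ ab, shiftPairs c t i ab = ∑ ab, t i ab :=
  Equiv.sum_comp (Equiv.addRight (c i)) (t i)

lemma pair_add_eq_iff_eq_add (u c ab : Pair) : u + c = ab ↔ u = ab + c :=
  CharTwo.add_eq_iff_eq_add

lemma Lam_add {n : ℕ} (p : ℝ) (y c : Fin n → Pair) :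
    Lam p (y + c) = shiftPairs c (Lam p y) := by
  funext i ab
  simp only [Lam, shiftPairs, chan, Pi.add_apply, pair_add_eq_iff_eq_add]

lemma indic_add {n : ℕ} (x z : Fin n → ZMod 2) :
    indic (x + z) = shiftPairs (pairRead z) (indic x) := by
  funext i ab
  exact if_congr (pair_add_eq_iff_eq_add (x i, x (nxt i)) (z i, z (nxt i)) ab) rfl rfl

noncomputable def bitSign (a : ZMod 2) : ℝ := 1 - 2 * a.val

lemma zmod_two_eq_zero_or_one (a : ZMod 2) : a = 0 ∨ a = 1 := by
  revert a; decide

lemma val_add_eq (a b : ZMod 2) :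
    (((a + b).val : ℕ) : ℝ) = bitSign b * a.val + b.val := by
  rcases zmod_two_eq_zero_or_one a with rfl | rfl <;>
    rcases zmod_two_eq_zero_or_one b with rfl | rfl <;>
    simp only [add_zero, zero_add, CharTwo.add_self_eq_zero] <;> norm_num [bitSign, ZMod.val_one]

lemma bitSign_mul_self_add (a : ZMod 2) (r : ℝ) :
    bitSign a * (bitSign a * r + a.val) + a.val = r := by
  rcases zmod_two_eq_zero_or_one a with rfl | rfl <;> norm_num [bitSign, ZMod.val_one]

/-- The reflection `v i ↦ 1 - v i` at the coordinates where `z i = 1`. -/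
noncomputable def flipMap {n : ℕ} (z : Fin n → ZMod 2) : (Fin n → ℝ) →ᵃ[ℝ] (Fin n → ℝ) where
  toFun v i := bitSign (z i) * v i + (z i).val
  linear := LinearMap.pi fun i => bitSign (z i) • LinearMap.proj i
  map_vadd' v w := by
    funext i
    simp only [vadd_eq_add, LinearMap.pi_apply, LinearMap.smul_apply, LinearMap.coe_proj,
      Function.eval, smul_eq_mul, Pi.add_apply]
    ring

lemma flipMap_emb {n : ℕ} (z w : Fin n → ZMod 2) : flipMap z (emb w) = emb (w + z) :=
  funext fun i => (val_add_eq (w i) (z i)).symm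

lemma flipMap_flipMap {n : ℕ} (z : Fin n → ZMod 2) (v : Fin n → ℝ) :
    flipMap z (flipMap z v) = v :=
  funext fun i => bitSign_mul_self_add (z i) (v i)

lemma flipMap_mem_fundPolytope {m n : ℕ} {H : Fin m → Fin n → ZMod 2} {z : Fin n → ZMod 2}
    (hz : z ∈ code H) {v : Fin n → ℝ} (hv : v ∈ fundPolytope H) :
    flipMap z v ∈ fundPolytope H := by
  simp only [fundPolytope, Set.mem_iInter] at hv ⊢
  intro j
  have hmem : flipMap z v ∈ flipMap z '' convexHull ℝ (emb '' localCode H j) :=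
    Set.mem_image_of_mem _ (hv j)
  rw [AffineMap.image_convexHull] at hmem
  refine convexHull_mono ?_ hmem
  rintro _ ⟨_, ⟨w, hw, rfl⟩, rfl⟩
  refine ⟨w + z, ?_, (flipMap_emb z w).symm⟩
  simp only [localCode, Set.mem_ofPred_eq, Pi.add_apply, mul_add, Finset.sum_add_distrib] at hw ⊢
  rw [hw, hz j, add_zero]

lemma sum_pair (f : Pair → ℝ) : ∑ ab, f ab = f (0, 0) + f (0, 1) + f (1, 0) + f (1, 1) := by
  rw [Fintype.sum_prod_type, show (Finset.univ : Finset (ZMod 2)) = {0, 1} from rfl]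
  simp [add_assoc]

lemma fst_marginal_add {t : Pair → ℝ} (ht : ∑ ab, t ab = 1) (c : Pair) :
    t ((1, 0) + c) + t ((1, 1) + c) = bitSign c.1 * (t (1, 0) + t (1, 1)) + c.1.val := by
  rw [sum_pair] at ht
  obtain ⟨a, b⟩ := c
  rcases zmod_two_eq_zero_or_one a with rfl | rfl <;>
    rcases zmod_two_eq_zero_or_one b with rfl | rfl <;>
    simp only [Prod.mk_add_mk, add_zero, zero_add, CharTwo.add_self_eq_zero] <;>
    norm_num [bitSign, ZMod.val_one] <;> linarith

lemma snd_marginal_add {t : Pair → ℝ} (ht : ∑ ab, t ab = 1) (c : Pair) :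
    t ((0, 1) + c) + t ((1, 1) + c) = bitSign c.2 * (t (0, 1) + t (1, 1)) + c.2.val := by
  rw [sum_pair] at ht
  obtain ⟨a, b⟩ := c
  rcases zmod_two_eq_zero_or_one a with rfl | rfl <;>
    rcases zmod_two_eq_zero_or_one b with rfl | rfl <;>
    simp only [Prod.mk_add_mk, add_zero, zero_add, CharTwo.add_self_eq_zero] <;>
    norm_num [bitSign, ZMod.val_one] <;> linarith

lemma flip_mem_feasible {m n : ℕ} {H : Fin m → Fin n → ZMod 2} {z : Fin n → ZMod 2}
    (hz : z ∈ code H) {v : Fin n → ℝ} {t : Fin n → Pair → ℝ} (h : (v, t) ∈ feasible H) :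
    (flipMap z v, shiftPairs (pairRead z) t) ∈ feasible H := by
  obtain ⟨hbox, hsum, hfst, hsnd, hQ⟩ := h
  refine ⟨fun i ab => hbox i _, fun i => (sum_shiftPairs _ t i).trans (hsum i), fun i => ?_,
    fun i => ?_, flipMap_mem_fundPolytope hz hQ⟩
  · exact (congrArg (fun r => bitSign (z i) * r + (z i).val) (hfst i)).trans
      (fst_marginal_add (hsum i) (pairRead z i)).symm
  · exact (congrArg (fun r => bitSign (z (nxt i)) * r + (z (nxt i)).val) (hsnd i)).trans
      (snd_marginal_add (hsum i) (pairRead z i)).symm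

lemma pi_add_cancel_right_of_charTwo {ι R : Type*} [Ring R] [CharP R 2] (x z : ι → R) :
    x + z + z = x :=
  funext fun i => CharTwo.add_cancel_right (x i) (z i)

lemma add_pairRead_mem_Bset {m n : ℕ} {H : Fin m → Fin n → ZMod 2} {p : ℝ}
    {x z : Fin n → ZMod 2} (hz : z ∈ code H) {y : Fin n → Pair} (hy : y ∈ Bset H p x) :
    y + pairRead z ∈ Bset H p (x + z) := by
  obtain ⟨⟨v, t⟩, hfeas, hne, hle⟩ := hy
  refine ⟨(flipMap z v, shiftPairs (pairRead z) t), flip_mem_feasible hz hfeas, fun h => hne ?_, ?_⟩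
  · calc v = flipMap z (flipMap z v) := (flipMap_flipMap z v).symm
      _ = flipMap z (emb (x + z)) := congrArg (flipMap z) h
      _ = emb x := by rw [flipMap_emb, pi_add_cancel_right_of_charTwo]
  · rwa [Lam_add, indic_add, innerP_shiftPairs, innerP_shiftPairs]

theorem stmt11_general {n m : ℕ} (H : Fin m → Fin n → ZMod 2)
    (p : ℝ)
    (x : Fin n → ZMod 2) (hx : x ∈ code H)
    (y : Fin n → Pair) :
    y ∈ Bset H p x ↔ (fun i => y i + (x i, x (nxt i))) ∈ Bset H p 0 := by
  change y ∈ Bset H p x ↔ y + pairRead x ∈ Bset H p 0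
  refine ⟨fun hy => ?_, fun hy => ?_⟩
  · have h := add_pairRead_mem_Bset hx hy
    rwa [show x + x = 0 from funext fun i => CharTwo.add_self_eq_zero (x i)] at h
  · have h := add_pairRead_mem_Bset hx hy
    rwa [pi_add_cancel_right_of_charTwo, zero_add] at h

/-- `ŷ ∈ B(x)` if and only if `ŷ₀ ∈ B(0)`. -/
theorem stmt11 {n m : ℕ} (hn : 2 ≤ n) (H : Fin m → Fin n → ZMod 2)
    (p : ℝ) (hp0 : 0 < p) (hp1 : p < 3 / 4)
    (x : Fin n → ZMod 2) (hx : x ∈ code H)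
    (y : Fin n → Pair) :
    y ∈ Bset H p x ↔ (fun i => y i + (x i, x (nxt i))) ∈ Bset H p 0 :=
  stmt11_general H p x hx y
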